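/- arXiv:1108.0123 — 2 statements merged into one kernel-verified Lean document; each statement's English description precedes it below -/
import Mathlib

section
/- If an independent set F of nodes all of degree at most 3 is eliminated from a graph G by replacing each F-node with a clique on its neighbors, the total number of edges does not increase: eliminating a degree-1 or degree-2 node decreases the edge count by at least 1, and eliminating a degree-3 node increases it by at most 0. -/
/-!
Write `E₀` for the edges of `G` with no endpoint in `F`. Since `F` is independent, the edges
at the different `F`-nodes are distinct, so `G` has at least `|E₀| + ∑_{u ∈ F} deg u` edges,
while the eliminated graph has at most `|E₀| + ∑_{u ∈ F} (deg u choose 2)`: every new edge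
joins two neighbours of some `u ∈ F`. Finally `(d choose 2) ≤ d` for `d ≤ 3`, strictly for
`d ∈ {1, 2}`.
-/

open Classical SimpleGraph

def elimGraph {V : Type*} (G : SimpleGraph V) (F : Set V) : SimpleGraph V where
  Adj v w := v ∉ F ∧ w ∉ F ∧ v ≠ w ∧
    (G.Adj v w ∨ ∃ u ∈ F, G.Adj u v ∧ G.Adj u w)
  symm := by
    constructor
    rintro v w ⟨hv, hw, hne, h⟩
    refine ⟨hw, hv, hne.symm, ?_⟩
    rcases h with h | ⟨u, hu, h1, h2⟩
    · exact Or.inl h.symm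
    · exact Or.inr ⟨u, hu, h2, h1⟩
  loopless := by constructor; rintro v ⟨_, _, hne, _⟩; exact hne rfl

open Finset

namespace SimpleGraph

variable {V : Type*} [Fintype V] [DecidableEq V] (G : SimpleGraph V) [DecidableRel G.Adj]

def neighborPairs (u : V) : Finset (Sym2 V) :=
  (G.neighborFinset u).offDiag.image Sym2.mk.uncurry

theorem card_neighborPairs (u : V) : #(G.neighborPairs u) = (G.degree u).choose 2 := by
  rw [neighborPairs, Sym2.card_image_offDiag, card_neighborFinset_eq_degree]

theorem card_biUnion_incidenceFinset {s : Finset V} (hs : G.IsIndepSet s) :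
    #(s.biUnion (fun u => G.incidenceFinset u)) = ∑ u ∈ s, G.degree u := by
  rw [card_biUnion]
  · simp only [card_incidenceFinset_eq_degree]
  · intro u hu v hv huv
    rw [Function.onFun, ← disjoint_coe, coe_incidenceFinset, coe_incidenceFinset,
      Set.disjoint_iff_inter_eq_empty]
    exact G.incidenceSet_inter_incidenceSet_of_not_adj (hs hu hv huv) huv

theorem edgeFinset_elimGraph_subset (s : Finset V) :
    (elimGraph G s).edgeFinset ⊆
      (G.edgeFinset \ s.biUnion (fun u => G.incidenceFinset u)) ∪ s.biUnion G.neighborPairs := by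
  rintro ⟨v, w⟩ he
  obtain ⟨hv, hw, hvw, hadj | ⟨u, hu, huv, huw⟩⟩ := mem_edgeFinset.1 he
  · refine mem_union_left _ (mem_sdiff.2 ⟨mem_edgeFinset.2 hadj, ?_⟩)
    simp only [mem_biUnion, mem_incidenceFinset, not_exists, not_and]
    rintro u hu ⟨-, hmem⟩
    rcases Sym2.mem_iff.1 hmem with rfl | rfl <;> contradiction
  · refine mem_union_right _ (mem_biUnion.2 ⟨u, hu, ?_⟩)
    exact mem_image_of_mem Sym2.mk.uncurry (mem_offDiag.2
      ⟨(G.mem_neighborFinset u v).2 huv, (G.mem_neighborFinset u w).2 huw, hvw⟩)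

theorem card_edgeFinset_elimGraph_add_sum_degree_le {s : Finset V} (hs : G.IsIndepSet s) :
    #(elimGraph G s).edgeFinset + ∑ u ∈ s, G.degree u ≤
      #G.edgeFinset + ∑ u ∈ s, (G.degree u).choose 2 := by
  set B := s.biUnion fun u => G.incidenceFinset u
  have hsub : B ⊆ G.edgeFinset := biUnion_subset.2 fun u _ => G.incidenceFinset_subset u
  have hB : #B = ∑ u ∈ s, G.degree u := G.card_biUnion_incidenceFinset hs
  have hle : #B ≤ #G.edgeFinset := card_le_card hsub
  calc #(elimGraph G s).edgeFinset + ∑ u ∈ s, G.degree u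
      ≤ #(G.edgeFinset \ B) + #(s.biUnion G.neighborPairs) + ∑ u ∈ s, G.degree u := by
        gcongr
        exact (card_le_card (G.edgeFinset_elimGraph_subset s)).trans (card_union_le _ _)
    _ ≤ #G.edgeFinset - #B + ∑ u ∈ s, (G.degree u).choose 2 + ∑ u ∈ s, G.degree u := by
        rw [card_sdiff_of_subset hsub]
        gcongr
        exact card_biUnion_le.trans_eq (sum_congr rfl fun u _ => G.card_neighborPairs u)
    _ = #G.edgeFinset + ∑ u ∈ s, (G.degree u).choose 2 := by omega

end SimpleGraph

theorem Nat.choose_two_le_self_of_le_three {d : ℕ} (hd : d ≤ 3) : d.choose 2 ≤ d := by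
  interval_cases d <;> decide

theorem Nat.choose_two_lt_self_of_le_two {d : ℕ} (hd₁ : 1 ≤ d) (hd₂ : d ≤ 2) :
    d.choose 2 < d := by
  interval_cases d <;> decide

theorem low_degree_elimination_edge_count_general
    (V : Type*) [Fintype V]
    (G : SimpleGraph V) [DecidableRel G.Adj] :
    (∀ F : Set V,
      (∀ u ∈ F, ∀ v ∈ F, ¬G.Adj u v) →
      (∀ u ∈ F, G.degree u ≤ 3) →
      (elimGraph G F).edgeSet.ncard ≤ G.edgeSet.ncard) ∧
    (∀ u : V, 1 ≤ G.degree u → G.degree u ≤ 2 →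
      (elimGraph G {u}).edgeSet.ncard + 1 ≤ G.edgeSet.ncard) ∧
    (∀ u : V, G.degree u = 3 →
      (elimGraph G {u}).edgeSet.ncard ≤ G.edgeSet.ncard) := by
  have key (s : Finset V) (hs : G.IsIndepSet s) :
      (elimGraph G s).edgeSet.ncard + ∑ u ∈ s, G.degree u ≤
        G.edgeSet.ncard + ∑ u ∈ s, (G.degree u).choose 2 := by
    simpa only [← coe_edgeFinset, Set.ncard_coe_finset] using
      G.card_edgeFinset_elimGraph_add_sum_degree_le hs
  have indep_case (F : Set V) (hF : ∀ u ∈ F, ∀ v ∈ F, ¬G.Adj u v)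
      (hdeg : ∀ u ∈ F, G.degree u ≤ 3) :
      (elimGraph G F).edgeSet.ncard ≤ G.edgeSet.ncard := by
    have hsum := sum_le_sum fun u hu =>
      Nat.choose_two_le_self_of_le_three (hdeg u (Set.mem_toFinset.1 hu))
    have hF' := key F.toFinset fun u hu v hv _ =>
      hF u (Set.mem_toFinset.1 hu) v (Set.mem_toFinset.1 hv)
    rw [Set.coe_toFinset] at hF'
    omega
  refine ⟨indep_case, fun u h₁ h₂ => ?_,
    fun u h₃ => indep_case {u} (by simp) (by simp [h₃])⟩
  have hu := key {u} (by simp)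
  rw [coe_singleton, sum_singleton, sum_singleton] at hu
  have hlt := Nat.choose_two_lt_self_of_le_two h₁ h₂
  omega

/-- Eliminating an independent set of nodes of degree at most 3 does not increase the
edge count; eliminating a single node of degree 1 or 2 decreases it by at least 1, and
eliminating a single node of degree 3 does not increase it. -/
theorem low_degree_elimination_edge_count
    (V : Type*) [Fintype V] [DecidableEq V]
    (G : SimpleGraph V) [DecidableRel G.Adj] :
    (∀ F : Set V,
      (∀ u ∈ F, ∀ v ∈ F, ¬G.Adj u v) →
      (∀ u ∈ F, G.degree u ≤ 3) →
      (elimGraph G F).edgeSet.ncard ≤ G.edgeSet.ncard) ∧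
    (∀ u : V, 1 ≤ G.degree u → G.degree u ≤ 2 →
      (elimGraph G {u}).edgeSet.ncard + 1 ≤ G.edgeSet.ncard) ∧
    (∀ u : V, G.degree u = 3 →
      (elimGraph G {u}).edgeSet.ncard ≤ G.edgeSet.ncard) :=
  low_degree_elimination_edge_count_general V G
end

section
/- Let A be the Laplacian of a connected graph (positive weights), U the all-ones vector, and consider the augmented (n+1)×(n+1) matrix [[A, U],[U^T, 0]]. This augmented matrix is invertible. -/
open Finset Matrix

/-!
If `(y, c)` lies in the kernel of `[[A, U], [Uᵀ, 0]]`, then `A y = -c U` and `Uᵀ y = 0`,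
so `yᵀ A y = -c Uᵀ y = 0`. For a weighted Laplacian, `2 yᵀ A y = ∑ w u v (y u - y v)²`,
so `y` is constant along edges, hence constant on the connected graph; having zero sum, it
vanishes, and then `c U = -A y = 0` forces `c = 0`.
-/

section WeightedLaplacian

variable {V R : Type*} [Fintype V] [DecidableEq V]

def weightedLaplacian [CommRing R] (w : V → V → R) : Matrix V V R :=
  diagonal (fun u => ∑ v, w u v) - of w

theorem weightedLaplacian_apply [CommRing R] {w : V → V → R} (hw : ∀ u, w u u = 0) (u v : V) :
    weightedLaplacian w u v = if u = v then ∑ s, w u s else -w u v := by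
  rcases eq_or_ne u v with rfl | h
  · simp [weightedLaplacian, hw]
  · simp [weightedLaplacian, h]

theorem weightedLaplacian_mulVec_apply [CommRing R] (w : V → V → R) (x : V → R) (u : V) :
    (weightedLaplacian w *ᵥ x) u = ∑ v, w u v * (x u - x v) := by
  rw [weightedLaplacian, sub_mulVec, Pi.sub_apply, mulVec_diagonal]
  simp only [mul_sub, sum_sub_distrib, ← sum_mul]
  rfl

theorem two_mul_dotProduct_weightedLaplacian_mulVec [CommRing R] {w : V → V → R}
    (hw : ∀ u v, w u v = w v u) (x : V → R) :
    2 * (x ⬝ᵥ weightedLaplacian w *ᵥ x) = ∑ u, ∑ v, w u v * (x u - x v) ^ 2 := by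
  have hswap : ∑ u, ∑ v, w u v * (x u * (x u - x v)) =
      ∑ u, ∑ v, w u v * (-x v * (x u - x v)) := by
    rw [sum_comm]
    refine sum_congr rfl fun u _ => sum_congr rfl fun v _ => ?_
    rw [hw]; ring
  have hform : x ⬝ᵥ weightedLaplacian w *ᵥ x = ∑ u, ∑ v, w u v * (x u * (x u - x v)) := by
    simp only [dotProduct, weightedLaplacian_mulVec_apply, mul_sum]
    refine sum_congr rfl fun u _ => sum_congr rfl fun v _ => ?_
    ring
  rw [two_mul, hform]
  nth_rw 2 [hswap]
  rw [← sum_add_distrib]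
  refine sum_congr rfl fun u _ => ?_
  rw [← sum_add_distrib]
  exact sum_congr rfl fun v _ => by ring

theorem apply_eq_of_dotProduct_weightedLaplacian_mulVec_eq_zero [CommRing R] [LinearOrder R]
    [IsStrictOrderedRing R] {w : V → V → R} (hw : ∀ u v, w u v = w v u)
    (hw_nonneg : ∀ u v, 0 ≤ w u v) {x : V → R} (hx : x ⬝ᵥ weightedLaplacian w *ᵥ x = 0)
    {u v : V} (huv : 0 < w u v) : x u = x v := by
  have hsum : ∑ u, ∑ v, w u v * (x u - x v) ^ 2 = 0 := by
    rw [← two_mul_dotProduct_weightedLaplacian_mulVec hw, hx, mul_zero]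
  have hterm : w u v * (x u - x v) ^ 2 = 0 := by
    have hnonneg : ∀ u v, 0 ≤ w u v * (x u - x v) ^ 2 := fun u v =>
      mul_nonneg (hw_nonneg u v) (sq_nonneg _)
    rw [Fintype.sum_eq_zero_iff_of_nonneg (fun u => sum_nonneg fun v _ => hnonneg u v)] at hsum
    exact congrFun ((Fintype.sum_eq_zero_iff_of_nonneg (hnonneg u)).1 (congrFun hsum u)) v
  have hsq := (mul_eq_zero.1 hterm).resolve_left huv.ne'
  exact sub_eq_zero.1 (pow_eq_zero_iff two_ne_zero |>.1 hsq)

end WeightedLaplacian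

theorem SimpleGraph.Reachable.apply_eq_of_forall_adj {V α : Type*} {G : SimpleGraph V}
    {f : V → α} {u v : V} (h : G.Reachable u v) (hf : ∀ a b, G.Adj a b → f a = f b) :
    f u = f v := by
  obtain ⟨p⟩ := h
  induction p with
  | nil => rfl
  | cons hadj _ ih => exact (hf _ _ hadj).trans ih

section Bordered

variable {V R : Type*} [Fintype V]

theorem fromBlocks_mulVec_eq_zero_iff [CommRing R] {A : Matrix V V R} {U : Matrix V (Fin 1) R}
    (hU : ∀ u i, U u i = 1) {x : V ⊕ Fin 1 → R} :
    fromBlocks A U Uᵀ 0 *ᵥ x = 0 ↔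
      A *ᵥ (x ∘ Sum.inl) = (fun _ => -x (Sum.inr 0)) ∧ ∑ u, x (Sum.inl u) = 0 := by
  simp [fromBlocks_mulVec, funext_iff, mulVec, dotProduct, hU, add_eq_zero_iff_eq_neg]

theorem isUnit_fromBlocks_of_dotProduct_mulVec_eq_zero [Field R] [CharZero R] [DecidableEq V]
    [Nonempty V] {A : Matrix V V R} {U : Matrix V (Fin 1) R} (hU : ∀ u i, U u i = 1)
    (hA : ∀ x, x ⬝ᵥ A *ᵥ x = 0 → ∀ u v, x u = x v) :
    IsUnit (fromBlocks A U Uᵀ 0) := by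
  rw [isUnit_iff_isUnit_det, isUnit_iff_ne_zero, ne_eq, ← exists_mulVec_eq_zero_iff]
  rintro ⟨x, hx_ne, hx⟩
  obtain ⟨hAy, hsum⟩ := (fromBlocks_mulVec_eq_zero_iff hU).1 hx
  set y := x ∘ Sum.inl
  set c := x (Sum.inr 0)
  have hquad : y ⬝ᵥ A *ᵥ y = 0 := by
    rw [hAy, dotProduct, ← sum_mul]
    simp [y, hsum]
  obtain ⟨u₀⟩ := ‹Nonempty V›
  have hy : ∀ u, y u = 0 := by
    have hcard : (Fintype.card V : R) * y u₀ = 0 :=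
      calc (Fintype.card V : R) * y u₀ = ∑ u, y u := by simp [hA y hquad _ u₀]
        _ = 0 := hsum
    intro u
    rw [hA y hquad u u₀]
    exact (mul_eq_zero.1 hcard).resolve_left (Nat.cast_ne_zero.2 Fintype.card_ne_zero)
  have hc : c = 0 := by
    have := congrFun hAy u₀
    rw [show y = 0 from funext hy, mulVec_zero] at this
    exact neg_eq_zero.1 this.symm
  refine hx_ne (funext fun i => ?_)
  rcases i with u | i
  · exact hy u
  · rw [Subsingleton.elim i 0]
    exact hc

end Bordered

/-- For the Laplacian `A` of a connected positively weighted graph and the all-ones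
column `U`, the augmented matrix `[[A, U],[Uᵀ, 0]]` is invertible. -/
theorem augmented_laplacian_invertible
    (n : ℕ) (G : SimpleGraph (Fin n)) (w : Fin n → Fin n → ℝ)
    (hconn : G.Connected)
    (hsymm : ∀ u v, w u v = w v u)
    (hpos : ∀ u v, G.Adj u v → 0 < w u v)
    (hzero : ∀ u v, ¬G.Adj u v → w u v = 0)
    (A : Matrix (Fin n) (Fin n) ℝ)
    (hA : ∀ u v, A u v = if u = v then ∑ s, w u s else -(w u v))
    (U : Matrix (Fin n) (Fin 1) ℝ) (hU : ∀ u i, U u i = 1) :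
    IsUnit (Matrix.fromBlocks A U Uᵀ (0 : Matrix (Fin 1) (Fin 1) ℝ)) := by
  have hw_nonneg : ∀ u v, 0 ≤ w u v := by
    intro u v
    by_cases h : G.Adj u v
    · exact (hpos u v h).le
    · exact (hzero u v h).ge
  have hA_eq : A = weightedLaplacian w := by
    ext u v
    rw [hA, weightedLaplacian_apply fun u => hzero u u G.irrefl]
  subst hA_eq
  have := hconn.nonempty
  refine isUnit_fromBlocks_of_dotProduct_mulVec_eq_zero hU fun x hx u v => ?_
  exact (hconn u v).apply_eq_of_forall_adj fun a b hab =>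
    apply_eq_of_dotProduct_weightedLaplacian_mulVec_eq_zero hsymm hw_nonneg hx (hpos a b hab)
end
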